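/- arXiv:2407.12215 — 4 statements merged into one kernel-verified Lean document; each statement's English description precedes it below -/
import Mathlib

section
/- Let F be a field, p a prime, and suppose there exist nonzero scalars m_{i,j} ∈ F for i ∈ Fin(p+1), j ∈ Fin(p+1) with j ≠ i, a basis (h_1, ..., h_{p+1}) of F^(p+1), vectors g_1, ..., g_{p+1} with g_i = Σ_{j ≠ i} m_{i,j} h_j, nonzero scalars a_i, b_i with h* := a_i h_i + b_i g_i independent of i (the same vector h* for all i), and nonzero scalars c_2, ..., c_{p+1} with g_1 = Σ_{i=2}^{p+1} c_i g_i. Then char F = p. -/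
/-!
Comparing the `h i`-coordinate of the representations `h* = a i • h i + b i • g i` shows that
`h* = ∑ j, a j • h j`, hence `g i = (b i)⁻¹ • (h* - a i • h i)`. The circuit relation among the `g i`
then becomes `∑ i, d i • (h* - a i • h i) = 0` with `d 0 = -(b 0)⁻¹` and `d i = c i / b i`
otherwise. Reading off the `h j`-coordinate gives `(∑ i, d i - d j) * a j = 0`, so every `d j`
equals `D = ∑ i, d i`; therefore `D = (p + 1) • D` with `D ≠ 0`, i.e. `p = 0` in `F`.
-/

open Finset

section

variable {F V ι : Type*} [Field F] [AddCommGroup V] [Module F V] [Fintype ι]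

theorem sum_update_smul [DecidableEq ι] (u : ι → F) (v : ι → V) (i : ι) (a : F) :
    ∑ j, Function.update u i a j • v j = a • v i + ∑ j ∈ univ.erase i, u j • v j := by
  rw [← add_sum_erase _ _ (mem_univ i), Function.update_self]
  congr 1
  refine sum_congr rfl fun j hj => ?_
  rw [Function.update_of_ne (ne_of_mem_erase hj)]

theorem LinearIndependent.eq_sum_diag_smul {h : ι → V} (hli : LinearIndependent F h) {x : V}
    {t : ι → ι → F} (hx : ∀ i, x = ∑ j, t i j • h j) (i : ι) : x = ∑ j, t j j • h j := by
  rw [hx i]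
  exact congrArg (∑ j, · j • h j) <|
    funext fun j => Fintype.linearIndependent_iffₛ.mp hli _ _ ((hx i).symm.trans (hx j)) j

theorem LinearIndependent.eq_sum_of_sum_smul_sub_smul_eq_zero {h : ι → V}
    (hli : LinearIndependent F h) {a d : ι → F} (ha : ∀ j, a j ≠ 0)
    (hd : ∑ i, d i • (∑ j, a j • h j - a i • h i) = 0) (j : ι) : d j = ∑ i, d i := by
  have hcoord : ∑ i, d i • (∑ j, a j • h j - a i • h i) = ∑ j, ((∑ i, d i - d j) * a j) • h j := by
    simp only [smul_sub, sum_sub_distrib, sub_mul, sub_smul, mul_smul, smul_sum, sum_smul]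
    rw [sum_comm]
  have hj := Fintype.linearIndependent_iff.mp hli _ (hcoord ▸ hd) j
  exact (sub_eq_zero.mp ((mul_eq_zero.mp hj).resolve_right (ha j))).symm

theorem natCast_card_eq_one_of_forall_eq_sum {d : ι → F} (hd : ∀ j, d j = ∑ i, d i) {j : ι}
    (hj : d j ≠ 0) : (Fintype.card ι : F) = 1 := by
  have hsum : ∑ i, d i = Fintype.card ι * d j := by
    rw [sum_congr rfl fun i _ => (hd i).trans (hd j).symm, sum_const, card_univ, nsmul_eq_mul]
  exact mul_right_cancel₀ hj (by rw [one_mul, ← hsum, ← hd j])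

end

theorem pFano_representation_forces_char_general (F : Type*) [Field F] (p : ℕ) (hp : p.Prime)
    (m : Fin (p + 1) → Fin (p + 1) → F)
    (h : Fin (p + 1) → Fin (p + 1) → F)
    (hli : LinearIndependent F h)
    (g : Fin (p + 1) → Fin (p + 1) → F)
    (hg : ∀ i, g i = ∑ j ∈ Finset.univ.erase i, m i j • h j)
    (a b : Fin (p + 1) → F) (ha : ∀ i, a i ≠ 0) (hb : ∀ i, b i ≠ 0)
    (hstar : Fin (p + 1) → F) (hhs : ∀ i, a i • h i + b i • g i = hstar)
    (c : Fin (p + 1) → F)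
    (hg1 : g 0 = ∑ i ∈ Finset.univ.erase 0, c i • g i) :
    ringChar F = p := by
  have hrep : ∀ i, hstar = ∑ j, Function.update (fun j => b i * m i j) i (a i) j • h j := by
    intro i
    simp only [sum_update_smul, ← hhs i, hg i, smul_sum, smul_smul]
  have hstar_eq : hstar = ∑ j, a j • h j := by
    simpa using hli.eq_sum_diag_smul hrep 0
  have hg_eq : ∀ i, g i = (b i)⁻¹ • (hstar - a i • h i) := fun i => by
    rw [← hhs i, add_sub_cancel_left, inv_smul_smul₀ (hb i)]
  set d : Fin (p + 1) → F := fun i => Function.update c 0 (-1) i * (b i)⁻¹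
  have hrel : ∑ i, d i • (∑ j, a j • h j - a i • h i) = 0 := by
    simp only [d, mul_smul, ← hstar_eq, ← hg_eq, sum_update_smul, ← hg1, neg_one_smul,
      neg_add_cancel]
  have hd0 : d 0 ≠ 0 := by simp [d, hb 0]
  have hcard := natCast_card_eq_one_of_forall_eq_sum
    (hli.eq_sum_of_sum_smul_sub_smul_eq_zero ha hrel) hd0
  rw [Fintype.card_fin, Nat.cast_add_one, add_eq_right] at hcard
  exact CharP.ringChar_of_prime_eq_zero hp hcard

/-- Scalar necessity direction for the class p-Fano matroid: if a basis h of F^(p+1),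
vectors g_i = Σ_{j≠i} m_{i,j} h_j (all m_{i,j} ≠ 0), a common vector h* = a_i h_i + b_i g_i
(all a_i, b_i ≠ 0), and a nonzero-coefficient relation g_1 = Σ_{i≥2} c_i g_i exist,
then char F = p. -/
theorem pFano_representation_forces_char (F : Type*) [Field F] (p : ℕ) (hp : p.Prime)
    (m : Fin (p + 1) → Fin (p + 1) → F) (hm : ∀ i j, j ≠ i → m i j ≠ 0)
    (h : Fin (p + 1) → Fin (p + 1) → F)
    (hli : LinearIndependent F h) (hspan : Submodule.span F (Set.range h) = ⊤)
    (g : Fin (p + 1) → Fin (p + 1) → F)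
    (hg : ∀ i, g i = ∑ j ∈ Finset.univ.erase i, m i j • h j)
    (a b : Fin (p + 1) → F) (ha : ∀ i, a i ≠ 0) (hb : ∀ i, b i ≠ 0)
    (hstar : Fin (p + 1) → F) (hhs : ∀ i, a i • h i + b i • g i = hstar)
    (c : Fin (p + 1) → F) (hc : ∀ i, i ≠ 0 → c i ≠ 0)
    (hg1 : g 0 = ∑ i ∈ Finset.univ.erase 0, c i • g i) :
    ringChar F = p :=
  pFano_representation_forces_char_general F p hp m h hli g hg a b ha hb hstar hhs c hg1
end

section
/- Let F be a field, p a prime, and suppose there exist nonzero scalars m_{i,j} ∈ F for i ∈ Fin(p+1), j ≠ i, a basis (h_1, ..., h_{p+1}) of F^(p+1), vectors g_i = Σ_{j ≠ i} m_{i,j} h_j, and nonzero scalars a_i, b_i such that a_i h_i + b_i g_i equals one common vector h* for all i ∈ Fin(p+1). If char F = p, then the family (g_1, ..., g_{p+1}) is linearly dependent. -/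
/-!
Reading off the `h i`-coordinate of `h* = a i • h i + b i • g i` gives `a i`, because `g i` has no
`h i`-component; hence `h* = ∑ i, a i • h i`. Summing the `p + 1` relations then yields
`∑ i, b i • g i = (p + 1) • h* - h* = p • h*`, which vanishes in characteristic `p`: a nontrivial
linear relation among the `g i`.
-/

open Finset

theorem LinearIndependent.eq_sum_diagonal {ι R M : Type*} [Fintype ι] [Nonempty ι] [Semiring R]
    [AddCommMonoid M] [Module R M] {v : ι → M} (hv : LinearIndependent R v) {x : M}
    {f : ι → ι → R} (hf : ∀ i, x = ∑ j, f i j • v j) : x = ∑ j, f j j • v j := by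
  obtain ⟨i⟩ := ‹Nonempty ι›
  rw [hf i]
  exact sum_congr rfl fun j _ =>
    congrArg (· • v j) (Fintype.linearIndependent_iffₛ.mp hv _ _ ((hf i).symm.trans (hf j)) j)

theorem smul_add_smul_sum_erase_eq_sum_ite {ι R M : Type*} [Fintype ι] [DecidableEq ι]
    [Semiring R] [AddCommMonoid M] [Module R M] (v : ι → M) (i : ι) (a b : R) (m : ι → R) :
    a • v i + b • ∑ j ∈ univ.erase i, m j • v j = ∑ j, (if j = i then a else b * m j) • v j := by
  rw [← add_sum_erase _ _ (mem_univ i), if_pos rfl, smul_sum]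
  refine congrArg _ (sum_congr rfl fun j hj => ?_)
  rw [if_neg (ne_of_mem_erase hj), mul_smul]

theorem sum_eq_zero_of_forall_add_eq_of_card_eq_one {ι R M : Type*} [Fintype ι] [Ring R]
    [AddCommGroup M] [Module R M] (hcard : (Fintype.card ι : R) = 1) {x y : ι → M} {c : M}
    (hx : c = ∑ i, x i) (hxy : ∀ i, x i + y i = c) : ∑ i, y i = 0 := by
  have hc : Fintype.card ι • c = c := by rw [← Nat.cast_smul_eq_nsmul R, hcard, one_smul]
  calc ∑ i, y i = ∑ i, (c - x i) := sum_congr rfl fun i _ => eq_sub_of_add_eq' (hxy i)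
    _ = 0 := by rw [sum_sub_distrib, sum_const, card_univ, hc, ← hx, sub_self]

theorem pNonFano_char_p_forces_dependent_general (F : Type*) [Field F] (p : ℕ)
    [CharP F p]
    (m : Fin (p + 1) → Fin (p + 1) → F)
    (h : Fin (p + 1) → Fin (p + 1) → F)
    (hli : LinearIndependent F h)
    (g : Fin (p + 1) → Fin (p + 1) → F)
    (hg : ∀ i, g i = ∑ j ∈ Finset.univ.erase i, m i j • h j)
    (a b : Fin (p + 1) → F) (hb : ∀ i, b i ≠ 0)
    (hstar : Fin (p + 1) → F) (hhs : ∀ i, a i • h i + b i • g i = hstar) :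
    ¬ LinearIndependent F g := by
  have hcoord : ∀ i, hstar = ∑ j, (if j = i then a i else b i * m i j) • h j := fun i => by
    rw [← hhs i, hg i, smul_add_smul_sum_erase_eq_sum_ite]
  have hstar_eq : hstar = ∑ i, a i • h i := by simpa using hli.eq_sum_diagonal hcoord
  have hcard : (Fintype.card (Fin (p + 1)) : F) = 1 := by simp [CharP.cast_eq_zero]
  have hrel : ∑ i, b i • g i = 0 :=
    sum_eq_zero_of_forall_add_eq_of_card_eq_one hcard hstar_eq hhs
  exact Fintype.not_linearIndependent_iff.mpr ⟨b, hrel, 0, hb 0⟩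

/-- Scalar necessity direction for the class p-non-Fano matroid: under the circuit
constraints of the p-Fano/p-non-Fano matroids, over a field of characteristic p the
family (g_1, ..., g_{p+1}) is forced to be linearly dependent. -/
theorem pNonFano_char_p_forces_dependent (F : Type*) [Field F] (p : ℕ) (hp : p.Prime)
    [CharP F p]
    (m : Fin (p + 1) → Fin (p + 1) → F) (hm : ∀ i j, j ≠ i → m i j ≠ 0)
    (h : Fin (p + 1) → Fin (p + 1) → F)
    (hli : LinearIndependent F h) (hspan : Submodule.span F (Set.range h) = ⊤)
    (g : Fin (p + 1) → Fin (p + 1) → F)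
    (hg : ∀ i, g i = ∑ j ∈ Finset.univ.erase i, m i j • h j)
    (a b : Fin (p + 1) → F) (ha : ∀ i, a i ≠ 0) (hb : ∀ i, b i ≠ 0)
    (hstar : Fin (p + 1) → F) (hhs : ∀ i, a i • h i + b i • g i = hstar) :
    ¬ LinearIndependent F g :=
  pNonFano_char_p_forces_dependent_general F p m h hli g hg a b hb hstar hhs
end

section
/- Let p be a prime and F a field with char F ≠ p. Define the same (p+1)×(2p+3) matrix H over F as for the p-Fano representation (columns i ∈ [p+1] equal e_i, columns p+2 ≤ i ≤ 2p+2 equal 𝟙 - e_{2p+3-i}, last column equal 𝟙). Then the first p+1 columns form a basis of F^(p+1), each set of columns ([p+1]\{i}) ∪ {2p+3-i} and {i, 2p+3-i, 2p+3} for i ∈ [p+1] is minimally linearly dependent, and the columns indexed by [p+2 : 2p+2] form a basis of F^(p+1). -/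
/-- The columns of the (p+1)×(2p+3) matrix H_p (0-based indexing):
column k = e_k for k < p+1, column k = 𝟙 - e_{p - (k-(p+1))} for p+1 ≤ k < 2p+2
(so in 1-based terms column p+1+i equals 𝟙 - e_{p+1-i}), and the last column is 𝟙. -/
noncomputable def pFanoCol (F : Type*) [Field F] (p : ℕ) (k : Fin (2 * p + 3)) :
    Fin (p + 1) → F :=
  if hk : (k : ℕ) < p + 1 then Pi.single (⟨k, hk⟩ : Fin (p + 1)) 1
  else if (k : ℕ) < 2 * p + 2 then
    (fun _ => 1) - Pi.single (⟨p - ((k : ℕ) - (p + 1)), by omega⟩ : Fin (p + 1)) 1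
  else fun _ => 1

/-- A finite family of columns is minimally linearly dependent (a circuit):
dependent, but removing any one member leaves an independent family. -/
def MinimallyDependent (F : Type*) [Field F] {ι V : Type*} [DecidableEq ι]
    [AddCommGroup V] [Module F V] (f : ι → V) (s : Finset ι) : Prop :=
  ¬ LinearIndependent F (fun x : s => f x.1) ∧
    ∀ j ∈ s, LinearIndependent F (fun x : (s.erase j) => f x.1)

/-! Both kinds of circuit are fundamental circuits: `𝟙 - e_i = ∑_{j ≠ i} e_j` and
`𝟙 = e_i + (𝟙 - e_i)` express one column through an independent family of columns with all
coefficients nonzero. The vectors `𝟙 - e_i` form a basis iff `p = (p + 1) - 1` is invertible: a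
relation `∑ g_j (𝟙 - e_j) = 0` forces every `g_j` to equal `∑ g`, whence `p · ∑ g = 0`. -/

open Finset Submodule

theorem Nat.Prime.cast_ne_zero_of_ringChar_ne {R : Type*} [NonAssocRing R] [Nontrivial R]
    {p : ℕ} (hp : p.Prime) (h : ringChar R ≠ p) : (p : R) ≠ 0 := by
  intro hp0
  rcases (Nat.dvd_prime hp).1 (ringChar.dvd hp0) with h1 | h1
  · exact CharP.ringChar_ne_one h1
  · exact h h1

theorem minimallyDependent_insert_of_eq_sum {F ι V : Type*} [Field F] [DecidableEq ι]
    [AddCommGroup V] [Module F V] {f : ι → V} {T : Finset ι} {k : ι} (hk : k ∉ T)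
    (hT : LinearIndepOn F f T) (c : ι → F) (hc : ∀ t ∈ T, c t ≠ 0)
    (hsum : f k = ∑ t ∈ T, c t • f t) : MinimallyDependent F f (insert k T) := by
  refine ⟨fun hdep => ?_, fun j hj => ?_⟩
  · have hdep : LinearIndepOn F f ↑(insert k T) := hdep
    rw [coe_insert] at hdep
    refine ((linearIndepOn_insert (by simpa using hk)).1 hdep).2 ?_
    rw [hsum]
    exact sum_mem fun t ht => smul_mem _ _ (subset_span (Set.mem_image_of_mem f ht))
  rcases mem_insert.1 hj with rfl | ht
  · rw [erase_insert hk]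
    exact hT
  have hne : j ≠ k := fun h => hk (h ▸ ht)
  change LinearIndepOn F f ↑((insert k T).erase j)
  rw [erase_insert_of_ne hne.symm, coe_insert,
    linearIndepOn_insert fun h => hk (mem_of_mem_erase h)]
  refine ⟨hT.mono (erase_subset j T), fun hk_span => ?_⟩
  rw [← insert_erase ht, coe_insert, linearIndepOn_insert (notMem_erase j T)] at hT
  refine hT.2 ?_
  -- as `c j ≠ 0`, `f k ∈ span (f '' (T.erase j))` would put `f j` there too
  have hfj : f j = (c j)⁻¹ • (f k - ∑ t ∈ T.erase j, c t • f t) := by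
    rw [hsum, ← add_sum_erase T _ ht, add_sub_cancel_right, smul_smul, inv_mul_cancel₀ (hc j ht),
      one_smul]
  rw [hfj]
  exact smul_mem _ _ (sub_mem hk_span
    (sum_mem fun t ht => smul_mem _ _ (subset_span (Set.mem_image_of_mem f ht))))

theorem linearIndependent_one_sub_single {F ι : Type*} [Field F] [Fintype ι] [DecidableEq ι]
    (h : (Fintype.card ι : F) ≠ 1) :
    LinearIndependent F (fun i : ι => (1 - Pi.single i 1 : ι → F)) := by
  rw [Fintype.linearIndependent_iff]
  intro g hg
  have hconst : ∀ r, g r = ∑ i, g i := fun r => by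
    have := congrFun hg r
    simp only [Finset.sum_apply, Pi.smul_apply, Pi.sub_apply, Pi.one_apply, Pi.single_apply,
      smul_eq_mul, mul_sub, mul_one, mul_ite, mul_zero, Finset.sum_sub_distrib,
      Finset.sum_ite_eq, Finset.mem_univ, if_true, Pi.zero_apply] at this
    exact (sub_eq_zero.1 this).symm
  have hsum : ∑ i, g i = 0 := by
    have : (Fintype.card ι - 1 : F) * ∑ i, g i = 0 := by
      rw [sub_mul, one_mul, sub_eq_zero]
      calc (Fintype.card ι : F) * ∑ i, g i = ∑ _i : ι, ∑ i, g i := by simp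
        _ = ∑ i, g i := (Finset.sum_congr rfl fun r _ => hconst r).symm
    exact (mul_eq_zero.1 this).resolve_left (sub_ne_zero.2 h)
  exact fun r => (hconst r).trans hsum

section Columns
variable {F : Type*} [Field F] {p : ℕ}

theorem pFanoCol_castLE (h : p + 1 ≤ 2 * p + 3) (i : Fin (p + 1)) :
    pFanoCol F p (Fin.castLE h i) = Pi.single i 1 :=
  dif_pos i.isLt

theorem linearIndependent_pFanoCol_castLE (h : p + 1 ≤ 2 * p + 3) :
    LinearIndependent F (pFanoCol F p ∘ Fin.castLE h) := by
  simpa only [Function.comp_def, pFanoCol_castLE] using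
    Pi.linearIndependent_single_one (Fin (p + 1)) F

theorem pFanoCol_reflect (i : Fin (p + 1)) (h : 2 * p + 1 - (i : ℕ) < 2 * p + 3) :
    pFanoCol F p ⟨2 * p + 1 - i, h⟩ = 1 - Pi.single i 1 := by
  have hi := i.isLt
  rw [pFanoCol, dif_neg (by simp only; omega), if_pos (by simp only; omega)]
  congr
  simp only
  omega

theorem pFanoCol_natAdd (j : Fin (p + 1)) (h : p + 1 + (j : ℕ) < 2 * p + 3) :
    pFanoCol F p ⟨p + 1 + j, h⟩ = 1 - Pi.single j.rev 1 := by
  rw [← pFanoCol_reflect j.rev (by omega)]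
  congr
  simp only [Fin.val_rev]
  omega

theorem pFanoCol_last (h : 2 * p + 2 < 2 * p + 3) : pFanoCol F p ⟨2 * p + 2, h⟩ = 1 := by
  rw [pFanoCol, dif_neg (by simp only; omega), if_neg (by simp only; omega)]
  rfl

theorem minimallyDependent_pFanoCol_insert_erase (i : Fin (p + 1)) :
    MinimallyDependent F (pFanoCol F p)
      (insert ⟨2 * p + 1 - i, (Nat.sub_le _ _).trans_lt (by omega)⟩
        ((univ.erase i).image (Fin.castLE (by omega)))) := by
  refine minimallyDependent_insert_of_eq_sum ?_ ?_ 1 (fun _ _ => one_ne_zero) ?_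
  · simp only [mem_image, Fin.ext_iff, Fin.val_castLE, not_exists, not_and]
    intro j _ hj
    omega
  · rw [coe_image]
    exact .image_of_comp _ _ ((linearIndependent_pFanoCol_castLE _).linearIndepOn _)
  · rw [pFanoCol_reflect, sum_image fun a _ b _ hab => Fin.castLE_injective _ hab]
    simp only [Pi.one_apply, one_smul, pFanoCol_castLE]
    rw [sum_erase_eq_sub (mem_univ i), Finset.univ_sum_single]
    rfl

theorem minimallyDependent_pFanoCol_triple (hp : p ≠ 0) (i : Fin (p + 1)) :
    MinimallyDependent F (pFanoCol F p)
      {Fin.castLE (by omega) i, ⟨2 * p + 1 - i, (Nat.sub_le _ _).trans_lt (by omega)⟩,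
        ⟨2 * p + 2, Nat.lt_add_one _⟩} := by
  have hi := i.isLt
  have : Nontrivial (Fin (p + 1)) := Fin.nontrivial_iff_two_le.2 (by omega)
  obtain ⟨j, hj⟩ := exists_ne i
  -- bring `𝟙 = e_i + (𝟙 - e_i)` to the front
  rw [pair_comm, insert_comm]
  refine minimallyDependent_insert_of_eq_sum ?_ ?_ 1 (fun _ _ => one_ne_zero) ?_
  · simp only [mem_insert, mem_singleton, Fin.ext_iff, Fin.val_castLE, not_or]
    omega
  · rw [coe_pair,
      linearIndepOn_pair_iff _ (by simp only [ne_eq, Fin.ext_iff, Fin.val_castLE]; omega)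
        (by simp [pFanoCol_castLE]),
      pFanoCol_castLE, pFanoCol_reflect]
    intro c hc
    simpa [hj] using congrFun hc j
  · rw [sum_pair (by simp only [ne_eq, Fin.ext_iff, Fin.val_castLE]; omega)]
    simp [pFanoCol_castLE, pFanoCol_reflect, pFanoCol_last]

end Columns

/-- Over a field of characteristic ≠ p (p prime), H_p is a scalar linear representation of
the class p-non-Fano matroid: columns [p+1] form a basis; each ([p+1]\{i}) ∪ {2p+3-i} and
{i, 2p+3-i, 2p+3} is a circuit; and the columns [p+2:2p+2] form a basis of F^(p+1). -/
theorem pNonFano_matrix_represents (F : Type*) [Field F] (p : ℕ) (hp : p.Prime)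
    (hchar : ringChar F ≠ p) :
    (LinearIndependent F
        (fun i : Fin (p + 1) => pFanoCol F p ⟨i, by have := i.isLt; omega⟩) ∧
      Submodule.span F
        (Set.range (fun i : Fin (p + 1) => pFanoCol F p ⟨i, by have := i.isLt; omega⟩)) = ⊤) ∧
    (∀ i : Fin (p + 1), MinimallyDependent F (pFanoCol F p)
      (insert (⟨2 * p + 1 - (i : ℕ), by have := i.isLt; omega⟩ : Fin (2 * p + 3))
        ((Finset.univ.erase i).image
          (fun j : Fin (p + 1) => (⟨j, by have := j.isLt; omega⟩ : Fin (2 * p + 3)))))) ∧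
    (∀ i : Fin (p + 1), MinimallyDependent F (pFanoCol F p)
      ({⟨i, by have := i.isLt; omega⟩, ⟨2 * p + 1 - (i : ℕ), by have := i.isLt; omega⟩,
        ⟨2 * p + 2, by omega⟩} : Finset (Fin (2 * p + 3)))) ∧
    (LinearIndependent F
        (fun j : Fin (p + 1) => pFanoCol F p ⟨p + 1 + (j : ℕ), by have := j.isLt; omega⟩) ∧
      Submodule.span F
        (Set.range
          (fun j : Fin (p + 1) => pFanoCol F p ⟨p + 1 + (j : ℕ), by have := j.isLt; omega⟩)) = ⊤) := by
  have isBasis : ∀ v : Fin (p + 1) → Fin (p + 1) → F, LinearIndependent F v →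
      LinearIndependent F v ∧ span F (Set.range v) = ⊤ :=
    fun v hv => ⟨hv, hv.span_eq_top_of_card_eq_finrank' (by simp)⟩
  have hcard_ne_one : (Fintype.card (Fin (p + 1)) : F) ≠ 1 := by
    simpa using hp.cast_ne_zero_of_ringChar_ne hchar
  refine ⟨isBasis (pFanoCol F p ∘ Fin.castLE (by omega)) ?_,
    minimallyDependent_pFanoCol_insert_erase, minimallyDependent_pFanoCol_triple hp.ne_zero,
    isBasis _ ?_⟩
  · exact linearIndependent_pFanoCol_castLE _
  · simp only [pFanoCol_natAdd]
    exact (linearIndependent_one_sub_single hcard_ne_one).comp _ Fin.rev_injective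
end

section
/- Let p be a prime and F a field. Consider the (p+1)×(p+2) matrix over F whose first p+1 columns are 𝟙 - e_i for i ∈ Fin(p+1) and whose last column is 𝟙. If char F = p, then the last column is not in the span of the first p+1 columns; if char F ≠ p, then the last column is in the span of the first p+1 columns. -/
/-!
Write `v i = 𝟙 - e i`. Reading off coordinates, `∑ cᵢ v i = 𝟙` forces every `cᵢ` to equal
`S - 1` with `S = ∑ cᵢ`, whence `S = (p + 1)(S - 1)`, i.e. `p (S - 1) = 1`. Conversely
`∑ v i = p • 𝟙`. So `𝟙` lies in the span exactly when `p` is invertible in `F`, that is, when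
`char F ≠ p`.
-/

open Finset Submodule

section OneSubSingle

variable {R ι : Type*} [CommRing R] [Fintype ι] [DecidableEq ι]

theorem sum_smul_one_sub_single (c : ι → R) :
    ∑ i, c i • (1 - Pi.single i 1 : ι → R) = (∑ i, c i) • 1 - c := by
  ext j
  simp [smul_sub, Finset.sum_apply, Pi.single_apply]

theorem one_mem_span_one_sub_single_iff :
    (1 : ι → R) ∈ span R (Set.range fun i => 1 - Pi.single i 1) ↔
      IsUnit ((Fintype.card ι : R) - 1) := by
  rw [mem_span_range_iff_exists_fun]
  constructor
  · rintro ⟨c, hc⟩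
    rw [sum_smul_one_sub_single] at hc
    generalize hS : ∑ i, c i = S at hc
    have hc_const (j : ι) : c j = S - 1 := by
      have hj : S - c j = 1 := by simpa using congrFun hc j
      linear_combination -hj
    have hS_card : S = Fintype.card ι * (S - 1) := calc
      S = ∑ j, c j := hS.symm
      _ = ∑ _j : ι, (S - 1) := by simp only [hc_const]
      _ = Fintype.card ι * (S - 1) := by rw [sum_const, card_univ, nsmul_eq_mul]
    exact .of_mul_eq_one (S - 1) (by linear_combination -hS_card)
  · rintro ⟨u, hu⟩
    refine ⟨fun _ => ↑u⁻¹, ?_⟩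
    rw [sum_smul_one_sub_single]
    ext j
    simp only [sum_const, card_univ, nsmul_eq_mul, Pi.sub_apply, Pi.smul_apply, Pi.one_apply,
      smul_eq_mul, mul_one]
    linear_combination (↑u⁻¹ : R) * hu.symm + u.inv_mul

end OneSubSingle

/-- For the (p+1)×(p+2) matrix whose first p+1 columns are 𝟙 - e_i and last column 𝟙:
over characteristic p the last column is not in the span of the first p+1 columns,
and over characteristic ≠ p it is. -/
theorem pFano_last_column_span (F : Type*) [Field F] (p : ℕ) (hp : p.Prime)
    (v : Fin (p + 1) → Fin (p + 1) → F)
    (hv : ∀ i, v i = (fun _ => 1) - Pi.single i 1) :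
    (ringChar F = p →
      ((fun _ => 1) : Fin (p + 1) → F) ∉ Submodule.span F (Set.range v)) ∧
    (ringChar F ≠ p →
      ((fun _ => 1) : Fin (p + 1) → F) ∈ Submodule.span F (Set.range v)) := by
  obtain rfl : v = fun i => 1 - Pi.single i 1 := funext hv
  have hspan := one_mem_span_one_sub_single_iff (R := F) (ι := Fin (p + 1))
  rw [Fintype.card_fin, Nat.cast_succ, add_sub_cancel_right, isUnit_iff_ne_zero] at hspan
  exact ⟨fun hchar hmem => hspan.mp hmem (hchar ▸ ringChar.Nat.cast_ringChar),
    fun hchar => hspan.mpr fun hp0 => hchar (CharP.ringChar_of_prime_eq_zero hp hp0)⟩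
end
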